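/- Ky Fan maximum principle: for a symmetric positive semidefinite matrix Σ in R^{n×n} with eigenvalues λ_1 ≥ ... ≥ λ_n, the supremum over all d-dimensional subspaces S of the trace of P_S Σ P_S (equivalently trace of Σ restricted to S) equals λ_1 + ... + λ_d. -/

import Mathlib

/-!
In an orthonormal eigenbasis `b` of `Σ`, `tr (P_S Σ P_S) = ∑ λᵢ ‖P_S bᵢ‖²`. The weights
`‖P_S bᵢ‖²` lie in `[0, 1]` and sum to `tr P_S = dim S = d`, and a weighted sum of the
decreasing `λᵢ` under such constraints is largest when the weight sits on the first `d`
indices; the span of the first `d` eigenvectors realises exactly these weights.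
-/

open Finset Submodule Module
open scoped InnerProductSpace

theorem sum_mul_le_sum_of_le_of_sum_eq_card {ι : Type*} [Fintype ι] [DecidableEq ι]
    (s : Finset ι) (lam t : ι → ℝ) (hlam : ∀ i ∈ s, ∀ j ∉ s, lam j ≤ lam i)
    (ht0 : ∀ i, 0 ≤ t i) (ht1 : ∀ i, t i ≤ 1) (hsum : ∑ i, t i = #s) :
    ∑ i, lam i * t i ≤ ∑ i ∈ s, lam i := by
  obtain ⟨c, hc_mem, hc_not_mem⟩ :
      ∃ c, (∀ i ∈ s, c ≤ lam i) ∧ ∀ j ∉ s, lam j ≤ c := by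
    rcases s.eq_empty_or_nonempty with rfl | hs
    · obtain ⟨c, hc⟩ := (Set.finite_range lam).bddAbove
      exact ⟨c, by simp, fun j _ => hc ⟨j, rfl⟩⟩
    · exact ⟨s.inf' hs lam, fun i hi => inf'_le _ hi,
        fun j hj => (le_inf'_iff hs lam).mpr fun i hi => hlam i hi j hj⟩
  calc ∑ i, lam i * t i = ∑ i, (lam i - c) * t i + c * #s := by
        rw [← hsum, mul_sum, ← sum_add_distrib]; congr 1; ext i; ring
    _ ≤ ∑ i, (if i ∈ s then lam i - c else 0) + c * #s := by
        gcongr with i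
        split_ifs with hi
        · nlinarith [hc_mem i hi, ht1 i]
        · nlinarith [hc_not_mem i hi, ht0 i]
    _ = ∑ i ∈ s, lam i := by
        rw [sum_ite_mem, univ_inter, sum_sub_distrib, sum_const, nsmul_eq_mul]; ring

theorem Fin.sum_mul_le_sum_filter_lt {n d : ℕ} (hd : d ≤ n) (lam t : Fin n → ℝ)
    (hlam : Antitone lam)
    (ht0 : ∀ i, 0 ≤ t i) (ht1 : ∀ i, t i ≤ 1) (hsum : ∑ i, t i = d) :
    ∑ i, lam i * t i ≤ ∑ i ∈ univ.filter (fun i : Fin n => (i : ℕ) < d), lam i := by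
  refine sum_mul_le_sum_of_le_of_sum_eq_card _ lam t ?_ ht0 ht1 ?_
  · simp only [mem_filter, mem_univ, true_and, not_lt]
    exact fun i hi j hj => hlam (Fin.le_def.mpr (by omega))
  · rw [hsum, Fin.card_filter_val_lt, min_eq_right hd]

section Projection

variable {E ι : Type*} [NormedAddCommGroup E] [InnerProductSpace ℝ E] [Fintype ι]

theorem OrthonormalBasis.finrank_span_image (b : OrthonormalBasis ι ℝ E) (s : Finset ι) :
    finrank ℝ (span ℝ (b '' s)) = #s := by
  rw [Set.image_eq_range]
  exact (finrank_span_eq_card (b.orthonormal.linearIndependent.comp _ Subtype.val_injective)).trans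
    (Fintype.card_coe s)

variable [FiniteDimensional ℝ E] (K : Submodule ℝ E)

theorem Submodule.trace_starProjection :
    LinearMap.trace ℝ E K.starProjection = finrank ℝ K :=
  LinearMap.IsProj.trace
    ⟨K.starProjection_apply_mem, fun _ hx => starProjection_eq_self_iff.mpr hx⟩

theorem Submodule.inner_starProjection_self (v : E) :
    ⟪v, K.starProjection v⟫_ℝ = ‖K.starProjection v‖ ^ 2 := by
  simpa [real_inner_comm] using K.re_inner_starProjection_eq_normSq v

theorem OrthonormalBasis.sum_norm_sq_starProjection (b : OrthonormalBasis ι ℝ E) :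
    ∑ i, ‖K.starProjection (b i)‖ ^ 2 = finrank ℝ K := by
  rw [← K.trace_starProjection, LinearMap.trace_eq_sum_inner _ b]
  exact sum_congr rfl fun i _ => (K.inner_starProjection_self _).symm

theorem OrthonormalBasis.trace_starProjection_comp_comp_starProjection
    (b : OrthonormalBasis ι ℝ E)
    (T : E →ₗ[ℝ] E) (μ : ι → ℝ) (hT : ∀ i, T (b i) = μ i • b i) :
    LinearMap.trace ℝ E ((K.starProjection : E →ₗ[ℝ] E) ∘ₗ T ∘ₗ K.starProjection)
      = ∑ i, μ i * ‖K.starProjection (b i)‖ ^ 2 := by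
  set P : E →ₗ[ℝ] E := K.starProjection.toLinearMap
  have hPP : P * P = P := congrArg ContinuousLinearMap.toLinearMap K.isIdempotentElem_starProjection
  have : LinearMap.trace ℝ E (P * (T * P)) = LinearMap.trace ℝ E (P * T) := by
    rw [LinearMap.trace_mul_comm, mul_assoc, hPP, LinearMap.trace_mul_comm]
  change LinearMap.trace ℝ E (P * (T * P)) = _
  rw [this, LinearMap.trace_eq_sum_inner _ b]
  refine sum_congr rfl fun i _ => ?_
  rw [Module.End.mul_apply, hT, map_smul, real_inner_smul_right]
  exact congrArg _ (K.inner_starProjection_self (b i))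

theorem OrthonormalBasis.starProjection_span_image_apply [DecidableEq ι]
    (b : OrthonormalBasis ι ℝ E) (s : Finset ι) (i : ι) :
    (span ℝ (b '' s)).starProjection (b i) = if i ∈ s then b i else 0 := by
  split_ifs with hi
  · exact starProjection_eq_self_iff.mpr (subset_span ⟨i, hi, rfl⟩)
  · refine (starProjection_apply_eq_zero_iff _).mpr ?_
    have : span ℝ {b i} ⟂ span ℝ (b '' s) := isOrtho_span.mpr ?_
    · exact this (mem_span_singleton_self _)
    rintro u rfl v ⟨j, hj, rfl⟩
    exact b.orthonormal.2 (by rintro rfl; exact hi hj)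

end Projection

theorem ky_fan_maximum_principle_general
    (n d : ℕ) (hd : d ≤ n)
    (Sig : Matrix (Fin n) (Fin n) ℝ)
    (hHerm : Sig.IsHermitian)
    (hsorted : ∀ i j : Fin n, i ≤ j → hHerm.eigenvalues j ≤ hHerm.eigenvalues i) :
    IsGreatest
      {x : ℝ | ∃ S : Submodule ℝ (EuclideanSpace ℝ (Fin n)),
        Module.finrank ℝ S = d ∧
        x = LinearMap.trace ℝ (EuclideanSpace ℝ (Fin n))
          ((S.subtype.comp (Submodule.orthogonalProjectionOnto S).toLinearMap).comp
            ((Matrix.toEuclideanLin Sig).comp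
              (S.subtype.comp (Submodule.orthogonalProjectionOnto S).toLinearMap)))}
      (∑ i ∈ Finset.univ.filter (fun i : Fin n => (i : ℕ) < d), hHerm.eigenvalues i) := by
  set b := hHerm.eigenvectorBasis
  have hb : ∀ i, Matrix.toEuclideanLin Sig (b i) = hHerm.eigenvalues i • b i := fun i =>
    WithLp.ofLp_injective _ (by simpa [Matrix.toLpLin_apply] using hHerm.mulVec_eigenvectorBasis i)
  have htrace (S : Submodule ℝ (EuclideanSpace ℝ (Fin n))) :
      LinearMap.trace ℝ _ ((S.subtype ∘ₗ S.orthogonalProjectionOnto.toLinearMap) ∘ₗ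
          Matrix.toEuclideanLin Sig ∘ₗ S.subtype ∘ₗ S.orthogonalProjectionOnto.toLinearMap)
        = ∑ i, hHerm.eigenvalues i * ‖S.starProjection (b i)‖ ^ 2 :=
    b.trace_starProjection_comp_comp_starProjection S _ _ hb
  set s := univ.filter (fun i : Fin n => (i : ℕ) < d)
  refine ⟨⟨span ℝ (b '' s), ?_, ?_⟩, ?_⟩
  · rw [b.finrank_span_image, Fin.card_filter_val_lt, min_eq_right hd]
  · simp [htrace, b.starProjection_span_image_apply, apply_ite, b.norm_eq_one, sum_ite_mem]
  · rintro x ⟨S, hS, rfl⟩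
    rw [htrace]
    refine Fin.sum_mul_le_sum_filter_lt hd _ _ hsorted (fun i => by positivity) (fun i => ?_) ?_
    · simpa [b.norm_eq_one] using S.norm_starProjection_apply_le (b i)
    · rw [b.sum_norm_sq_starProjection, hS]

/-- Ky Fan maximum principle: for a real symmetric positive semidefinite matrix `Sig` with
eigenvalues listed in decreasing order, the supremum over all `d`-dimensional subspaces `S`
of the trace of `P_S ∘ Σ ∘ P_S` is attained and equals the sum of the `d` largest
eigenvalues. -/
theorem ky_fan_maximum_principle
    (n d : ℕ) (hd : d ≤ n)
    (Sig : Matrix (Fin n) (Fin n) ℝ)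
    (hHerm : Sig.IsHermitian)
    (hPSD : Sig.PosSemidef)
    (hsorted : ∀ i j : Fin n, i ≤ j → hHerm.eigenvalues j ≤ hHerm.eigenvalues i) :
    IsGreatest
      {x : ℝ | ∃ S : Submodule ℝ (EuclideanSpace ℝ (Fin n)),
        Module.finrank ℝ S = d ∧
        x = LinearMap.trace ℝ (EuclideanSpace ℝ (Fin n))
          ((S.subtype.comp (Submodule.orthogonalProjectionOnto S).toLinearMap).comp
            ((Matrix.toEuclideanLin Sig).comp
              (S.subtype.comp (Submodule.orthogonalProjectionOnto S).toLinearMap)))}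
      (∑ i ∈ Finset.univ.filter (fun i : Fin n => (i : ℕ) < d), hHerm.eigenvalues i) :=
  ky_fan_maximum_principle_general n d hd Sig hHerm hsorted
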